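/- Let τ be a finite Wang tileset such that every east/west color appears on the west side of exactly one tile (equivalently, in the graph representation every vertex has outdegree exactly 1), and every east/west color appears on the east side of at least one tile. If τ admits a tiling of the plane, then τ admits a periodic tiling. In fact, every row of every tiling by τ is horizontally periodic with period dividing the number of tiles reachable in its cycle. -/

import Mathlib

structure WangTile (C : Type) where
  e : C
  w : C
  n : C
  s : C
deriving DecidableEq

def IsTiling {C : Type} (τ : Set (WangTile C)) (f : ℤ → ℤ → WangTile C) : Prop :=
  (∀ i j, f i j ∈ τ) ∧ (∀ i j, (f i j).e = (f (i+1) j).w) ∧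
    (∀ i j, (f i j).n = (f i (j+1)).s)

/-!
Since a colour is the west colour of at most one tile of `τ`, the east neighbour of a tile is
determined by the tile, so every row of a tiling is a biinfinite orbit of the successor map of the
graph of `τ`. An orbit that stays in a finite set in both directions lies on a cycle; hence the
row is periodic, with period the length of that cycle, which is the number of tiles in the row.
So `(#τ)!` is a common horizontal period, a row is determined by `(#τ)!` consecutive tiles, two rows
`a < b` of the tiling coincide, and repeating the strip of rows between them gives a tiling that is
periodic in both directions.
-/

open Function Set

section Orbit

variable {α : Type*} {σ : α → α} {r : ℤ → α}

theorem iterate_apply_eq_of_forall_add_one (hr : ∀ i, r (i + 1) = σ (r i)) (i : ℤ) (n : ℕ) :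
    σ^[n] (r i) = r (i + n) := by
  induction n with
  | zero => simp
  | succ n ih => rw [iterate_succ_apply', ih, ← hr, Nat.cast_succ, add_assoc]

/-- A biinfinite orbit with finitely many values lies on a cycle: two of `r (i - k)`, `k : ℕ`,
coincide, and pushing that coincidence forward returns to `r i`. -/
theorem mem_periodicPts_of_forall_add_one (hr : ∀ i, r (i + 1) = σ (r i))
    (hfin : (range r).Finite) (i : ℤ) : r i ∈ periodicPts σ := by
  obtain ⟨k, l, hkl, heq⟩ := hfin.exists_lt_map_eq_of_forall_mem
    (f := fun n : ℕ => r (i - n)) fun n => mem_range_self _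
  refine ⟨l - k, Nat.sub_pos_of_lt hkl, ?_⟩
  calc σ^[l - k] (r i) = σ^[l] (r (i - k)) := by
        rw [iterate_apply_eq_of_forall_add_one hr, iterate_apply_eq_of_forall_add_one hr]
        congr 1; push_cast [hkl.le]; ring
    _ = r i := by
        rw [heq, iterate_apply_eq_of_forall_add_one hr, sub_add_cancel]

theorem minimalPeriod_eq_of_forall_add_one (hr : ∀ i, r (i + 1) = σ (r i))
    (hfin : (range r).Finite) (i : ℤ) : minimalPeriod σ (r i) = minimalPeriod σ (r 0) := by
  have shift (m : ℤ) (n : ℕ) : minimalPeriod σ (r (m + n)) = minimalPeriod σ (r m) := by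
    rw [← iterate_apply_eq_of_forall_add_one hr,
      minimalPeriod_apply_iterate (mem_periodicPts_of_forall_add_one hr hfin m)]
  obtain ⟨m, hi, h0⟩ : ∃ m : ℤ, m + (i - m).toNat = i ∧ m + (-m).toNat = 0 :=
    ⟨min i 0, by omega, by omega⟩
  rw [← hi, ← h0, shift, shift]

theorem periodic_of_forall_add_one (hr : ∀ i, r (i + 1) = σ (r i))
    (hfin : (range r).Finite) : Periodic r (minimalPeriod σ (r 0)) := fun i => by
  rw [← minimalPeriod_eq_of_forall_add_one hr hfin i, ← iterate_apply_eq_of_forall_add_one hr,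
    iterate_minimalPeriod]

theorem ncard_range_of_forall_add_one (hr : ∀ i, r (i + 1) = σ (r i))
    (hfin : (range r).Finite) : (range r).ncard = minimalPeriod σ (r 0) := by
  have hpos : (0 : ℤ) < minimalPeriod σ (r 0) := Nat.cast_pos.2 <|
    minimalPeriod_pos_of_mem_periodicPts (mem_periodicPts_of_forall_add_one hr hfin 0)
  have hrange : range r = (fun n : ℕ => σ^[n] (r 0)) '' Iio (minimalPeriod σ (r 0)) := by
    refine Subset.antisymm ?_ (image_subset_iff.2 fun n _ => ⟨n, ?_⟩)
    · rintro _ ⟨i, rfl⟩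
      obtain ⟨y, ⟨hy0, hyp⟩, hiy⟩ := (periodic_of_forall_add_one hr hfin).exists_mem_Ico₀ hpos i
      refine ⟨y.toNat, mem_Iio.2 (by omega), ?_⟩
      show σ^[y.toNat] (r 0) = r i
      rw [hiy, iterate_apply_eq_of_forall_add_one hr, zero_add, Int.toNat_of_nonneg hy0]
    · show r n = σ^[n] (r 0)
      rw [iterate_apply_eq_of_forall_add_one hr, zero_add]
  rw [hrange, iterate_injOn_Iio_minimalPeriod.ncard_image, ncard_Iio_nat]

end Orbit

theorem Function.Periodic.eq_of_forall_fin {α : Type*} {r s : ℤ → α} {Q : ℕ} (hQ : 0 < Q)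
    (hr : Periodic r Q) (hs : Periodic s Q) (h : ∀ k : Fin Q, r k = s k) : r = s := by
  funext i
  have hmod (t : ℤ → α) (ht : Periodic t Q) : t i = t (i % Q).toNat := by
    rw [Int.toNat_of_nonneg (Int.emod_nonneg i (by omega)), Int.emod_def, mul_comm,
      ← smul_eq_mul, ht.sub_zsmul_eq]
  have hlt : (i % Q).toNat < Q := by
    have := Int.emod_lt_of_pos i (Int.natCast_pos.2 hQ)
    omega
  rw [hmod r hr, hmod s hs]
  exact h ⟨_, hlt⟩

namespace WangTile

variable {C : Type}

open Classical in
/-- The edge following the edge `t` in the graph of `τ`, whose vertices are the colours. -/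
noncomputable def eastNeighbor (τ : Set (WangTile C)) (t : WangTile C) : WangTile C :=
  if h : ∃ u ∈ τ, u.w = t.e then h.choose else t

theorem injOn_w_of_card_filter_eq_one [DecidableEq C] {τ : Finset (WangTile C)}
    (hW : ∀ c : C, (∃ t ∈ τ, t.e = c ∨ t.w = c) → (τ.filter (fun t => t.w = c)).card = 1) :
    (τ : Set (WangTile C)).InjOn WangTile.w := fun u hu v hv huv => by
  obtain ⟨a, ha⟩ := Finset.card_eq_one.1 (hW u.w ⟨u, hu, Or.inr rfl⟩)
  have hu' : u ∈ τ.filter (fun t => t.w = u.w) := Finset.mem_filter.2 ⟨hu, rfl⟩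
  have hv' : v ∈ τ.filter (fun t => t.w = u.w) := Finset.mem_filter.2 ⟨hv, huv.symm⟩
  rw [ha, Finset.mem_singleton] at hu' hv'
  rw [hu', hv']

end WangTile

open WangTile

namespace IsTiling

variable {C : Type} {τ : Set (WangTile C)} {f : ℤ → ℤ → WangTile C}

theorem apply_add_one_eq_eastNeighbor (hinj : τ.InjOn WangTile.w) (hf : IsTiling τ f)
    (i j : ℤ) : f (i + 1) j = eastNeighbor τ (f i j) := by
  have h : ∃ u ∈ τ, u.w = (f i j).e := ⟨f (i + 1) j, hf.1 _ _, (hf.2.1 i j).symm⟩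
  rw [eastNeighbor, dif_pos h]
  exact hinj (hf.1 _ _) h.choose_spec.1 (by rw [h.choose_spec.2, hf.2.1])

theorem finite_range_row (hτ : τ.Finite) (hf : IsTiling τ f) (j : ℤ) :
    (range (f · j)).Finite :=
  hτ.subset (range_subset_iff.2 fun i => hf.1 i j)

theorem ncard_range_row_pos (hτ : τ.Finite) (hf : IsTiling τ f) (j : ℤ) :
    0 < (range (f · j)).ncard :=
  (ncard_pos (hf.finite_range_row hτ j)).2 (range_nonempty _)

theorem periodic_row (hinj : τ.InjOn WangTile.w) (hτ : τ.Finite) (hf : IsTiling τ f) (j : ℤ) :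
    Periodic (f · j) (range (f · j)).ncard := by
  have hr := (hf.apply_add_one_eq_eastNeighbor hinj · j)
  rw [ncard_range_of_forall_add_one hr (hf.finite_range_row hτ j)]
  exact periodic_of_forall_add_one hr (hf.finite_range_row hτ j)

theorem periodic_row_factorial (hinj : τ.InjOn WangTile.w) (hτ : τ.Finite) (hf : IsTiling τ f)
    (j : ℤ) : Periodic (f · j) (τ.ncard).factorial := by
  obtain ⟨k, hk⟩ := Nat.dvd_factorial (hf.ncard_range_row_pos hτ j)
    (ncard_le_ncard (range_subset_iff.2 fun i => hf.1 i j) hτ)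
  simpa only [hk, Nat.cast_mul, mul_comm] using (hf.periodic_row hinj hτ j).nat_mul k

theorem exists_lt_rows_eq (hinj : τ.InjOn WangTile.w) (hτ : τ.Finite) (hf : IsTiling τ f) :
    ∃ a b, a < b ∧ ∀ i, f i a = f i b := by
  obtain ⟨a, b, hab, heq⟩ := (Finite.pi (t := fun _ : Fin (τ.ncard).factorial => τ)
    fun _ => hτ).exists_lt_map_eq_of_forall_mem
      (f := fun (j : ℤ) (k : Fin (τ.ncard).factorial) => f k j)
      fun j => mem_univ_pi.2 fun k => hf.1 _ _
  exact ⟨a, b, hab, congrFun <| Periodic.eq_of_forall_fin (Nat.factorial_pos _)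
    (hf.periodic_row_factorial hinj hτ a) (hf.periodic_row_factorial hinj hτ b) (congrFun heq)⟩

/-- Repeating the strip of rows `a, …, b - 1` vertically gives a tiling, since row `b`, which
must follow row `b - 1`, equals row `a`. -/
theorem wrap_rows (hf : IsTiling τ f) {a b : ℤ} (hab : a < b) (heq : ∀ i, f i a = f i b) :
    IsTiling τ (fun i j => f i (a + (j - a) % (b - a))) := by
  refine ⟨fun i j => hf.1 _ _, fun i j => hf.2.1 _ _, fun i j => ?_⟩
  have h0 := Int.emod_nonneg (j - a) (by omega : b - a ≠ 0)
  have hlt := Int.emod_lt_of_pos (j - a) (by omega : 0 < b - a)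
  have hstep : (j + 1 - a) % (b - a) = ((j - a) % (b - a) + 1) % (b - a) := by
    rw [Int.emod_add_emod, sub_add_eq_add_sub]
  dsimp only
  suffices f i (a + (j + 1 - a) % (b - a)) = f i (a + (j - a) % (b - a) + 1) by
    rw [this]; exact hf.2.2 _ _
  rw [hstep]
  rcases (by omega : (j - a) % (b - a) + 1 < b - a ∨ (j - a) % (b - a) + 1 = b - a) with hm | hm
  · rw [Int.emod_eq_of_lt (by omega) hm, add_assoc]
  · rw [hm, Int.emod_self, add_zero, add_assoc, hm, add_sub_cancel, heq]

end IsTiling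

theorem stmt8_general {C : Type} [DecidableEq C] (τ : Finset (WangTile C))
    (hW : ∀ c : C, (∃ t ∈ τ, t.e = c ∨ t.w = c) →
      (τ.filter (fun t => t.w = c)).card = 1)
    (h : ∃ f, IsTiling (↑τ : Set (WangTile C)) f) :
    (∃ (g : ℤ → ℤ → WangTile C) (q : ℤ), IsTiling (↑τ : Set (WangTile C)) g ∧
      0 < q ∧ ∀ i j, g (i + q) j = g i j ∧ g i (j + q) = g i j) ∧
    (∀ f, IsTiling (↑τ : Set (WangTile C)) f → ∀ j : ℤ, ∃ p : ℕ, 0 < p ∧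
      p ∣ Set.ncard {t : WangTile C | ∃ i : ℤ, f i j = t} ∧
      ∀ i : ℤ, f (i + (p : ℤ)) j = f i j) := by
  have hinj := injOn_w_of_card_filter_eq_one hW
  have hτ := τ.finite_toSet
  refine ⟨?_, fun f hf j => ⟨_, hf.ncard_range_row_pos hτ j, dvd_rfl, hf.periodic_row hinj hτ j⟩⟩
  obtain ⟨f, hf⟩ := h
  obtain ⟨a, b, hab, heq⟩ := hf.exists_lt_rows_eq hinj hτ
  refine ⟨_, (b - a) * ((τ : Set (WangTile C)).ncard.factorial : ℤ), hf.wrap_rows hab heq,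
    mul_pos (by omega) (by positivity), fun i j => ⟨?_, ?_⟩⟩
  · simpa only [Int.cast_id] using (hf.periodic_row_factorial hinj hτ _).int_mul (b - a) i
  · rw [add_sub_right_comm, Int.add_mul_emod_self_left]

theorem stmt8 {C : Type} [Fintype C] [DecidableEq C] (τ : Finset (WangTile C))
    (hW : ∀ c : C, (∃ t ∈ τ, t.e = c ∨ t.w = c) →
      (τ.filter (fun t => t.w = c)).card = 1)
    (hE : ∀ c : C, (∃ t ∈ τ, t.e = c ∨ t.w = c) → ∃ t ∈ τ, t.e = c)
    (h : ∃ f, IsTiling (↑τ : Set (WangTile C)) f) :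
    (∃ (g : ℤ → ℤ → WangTile C) (q : ℤ), IsTiling (↑τ : Set (WangTile C)) g ∧
      0 < q ∧ ∀ i j, g (i + q) j = g i j ∧ g i (j + q) = g i j) ∧
    (∀ f, IsTiling (↑τ : Set (WangTile C)) f → ∀ j : ℤ, ∃ p : ℕ, 0 < p ∧
      p ∣ Set.ncard {t : WangTile C | ∃ i : ℤ, f i j = t} ∧
      ∀ i : ℤ, f (i + (p : ℤ)) j = f i j) :=
  stmt8_general τ hW h
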